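/- arXiv:1904.12992 — 8 statements merged into one kernel-verified Lean document; each statement's English description precedes it below -/
import Mathlib

section
/- Let N ≥ 1 and let τ_0 < τ_1 < ... < τ_N be real numbers. Let B_0,...,B_N be a Case-(a) Birkhoff basis for these nodes. Define the N×N matrices D_a := (L_j'(τ_i))_{1≤i,j≤N} and B_a := (B_j(τ_i))_{1≤i,j≤N}. Then D_a · B_a = I_N, the N×N identity matrix. -/
open Polynomial Matrix

section LagrangeBasis

variable {R ι : Type*} [CommRing R] [IsDomain R] [Fintype ι] [DecidableEq ι]
  {v : ι → R} {L : ι → R[X]}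

theorem Polynomial.eq_sum_eval_smul_of_eval_eq_ite (hv : Function.Injective v)
    (hL : ∀ i j, (L j).eval (v i) = if i = j then 1 else 0)
    (hLdeg : ∀ j, (L j).degree < Fintype.card ι) {p : R[X]}
    (hp : p.degree < Fintype.card ι) :
    p = ∑ j, p.eval (v j) • L j := by
  refine eq_of_degrees_lt_of_eval_index_eq Finset.univ hv.injOn hp ?_ fun i _ => ?_
  · rw [← mem_degreeLT]
    exact Submodule.sum_mem _ fun j _ => Submodule.smul_mem _ _ (mem_degreeLT.2 (hLdeg j))
  · simp [eval_finsetSum, hL]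

theorem Polynomial.eval_derivative_eq_sum_of_eval_eq_ite (hv : Function.Injective v)
    (hL : ∀ i j, (L j).eval (v i) = if i = j then 1 else 0)
    (hLdeg : ∀ j, (L j).degree < Fintype.card ι) {p : R[X]}
    (hp : p.degree < Fintype.card ι) (x : R) :
    (derivative p).eval x = ∑ j, p.eval (v j) * (derivative (L j)).eval x := by
  conv_lhs => rw [eq_sum_eval_smul_of_eval_eq_ite hv hL hLdeg hp]
  simp [eval_finsetSum]

end LagrangeBasis

theorem birkhoff_case_a_DaBa_eq_one_general
    (N : ℕ) (τ : Fin (N + 1) → ℝ) (hτ : StrictMono τ)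
    (L B : Fin (N + 1) → Polynomial ℝ)
    (hLdeg : ∀ j, (L j).natDegree ≤ N)
    (hL : ∀ i j, (L j).eval (τ i) = if i = j then 1 else 0)
    (hBdeg : ∀ j, (B j).natDegree ≤ N)
    (hBj0 : ∀ j : Fin N, (B j.succ).eval (τ 0) = 0)
    (hBj' : ∀ i j : Fin N,
      (derivative (B j.succ)).eval (τ i.succ) = if i = j then 1 else 0) :
    (Matrix.of fun i j : Fin N => (derivative (L j.succ)).eval (τ i.succ)) *
      (Matrix.of fun i j : Fin N => (B j.succ).eval (τ i.succ)) = 1 := by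
  have hdeg {p : ℝ[X]} (hp : p.natDegree ≤ N) : p.degree < Fintype.card (Fin (N + 1)) :=
    (degree_le_of_natDegree_le hp).trans_lt (by rw [Fintype.card_fin]; exact_mod_cast N.lt_succ_self)
  ext i k
  -- Differentiate the Lagrange expansion of `B k.succ` at `τ i.succ`: the `τ 0` term drops out by `hBj0`.
  have hrow := eval_derivative_eq_sum_of_eval_eq_ite hτ.injective hL (fun j => hdeg (hLdeg j))
    (hdeg (hBdeg k.succ)) (τ i.succ)
  rw [Fin.sum_univ_succ, hBj0, zero_mul, zero_add, hBj'] at hrow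
  simp only [mul_apply, of_apply, one_apply, hrow, mul_comm]

/-- Theorem 1 (Wang–Samson–Zhao), Case (a): for a Case-(a) Birkhoff basis
`B₀,…,B_N` and Lagrange basis `L₀,…,L_N` on nodes `τ₀ < ⋯ < τ_N`,
the matrices `D_a := (L_j'(τ_i))_{1≤i,j≤N}` and `B_a := (B_j(τ_i))_{1≤i,j≤N}`
satisfy `D_a * B_a = I_N`. -/
theorem birkhoff_case_a_DaBa_eq_one
    (N : ℕ) (hN : 1 ≤ N) (τ : Fin (N + 1) → ℝ) (hτ : StrictMono τ)
    (L B : Fin (N + 1) → Polynomial ℝ)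
    (hLdeg : ∀ j, (L j).natDegree ≤ N)
    (hL : ∀ i j, (L j).eval (τ i) = if i = j then 1 else 0)
    (hBdeg : ∀ j, (B j).natDegree ≤ N)
    (hB00 : (B 0).eval (τ 0) = 1)
    (hBj0 : ∀ j : Fin N, (B j.succ).eval (τ 0) = 0)
    (hB0' : ∀ i : Fin N, (derivative (B 0)).eval (τ i.succ) = 0)
    (hBj' : ∀ i j : Fin N,
      (derivative (B j.succ)).eval (τ i.succ) = if i = j then 1 else 0) :
    (Matrix.of fun i j : Fin N => (derivative (L j.succ)).eval (τ i.succ)) *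
      (Matrix.of fun i j : Fin N => (B j.succ).eval (τ i.succ)) = 1 :=
  birkhoff_case_a_DaBa_eq_one_general N τ hτ L B hLdeg hL hBdeg hBj0 hBj'
end

section
/- Let N ≥ 1 and let τ_0 < τ_1 < ... < τ_N be real numbers. Let B_0,...,B_N be a Case-(b) Birkhoff basis for these nodes. Define the N×N matrices D_b := (L_j'(τ_i))_{0≤i,j≤N−1} and B_b := (B_j(τ_i))_{0≤i,j≤N−1}. Then D_b · B_b = I_N, the N×N identity matrix. -/
open Polynomial Matrix

/-! Expanding `B_j` (`j < N`) in the Lagrange basis and differentiating gives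
`B_j' = ∑_k B_j(τ_k) L_k'`. Evaluating at `τ_i` (`i < N`), the left side is `δ_{ij}`, and the
`k = N` term vanishes because `B_j(τ_N) = 0`, so what remains is the `(i, j)` entry of
`D_b * B_b`. -/

namespace Polynomial

variable {R ι : Type*} [CommRing R] [IsDomain R] [Fintype ι] [DecidableEq ι]
  {τ : ι → R} {L : ι → R[X]}

theorem eq_sum_C_eval_mul_of_lagrange (hτ : Function.Injective τ)
    (hLdeg : ∀ j, (L j).natDegree < Fintype.card ι)
    (hL : ∀ i j, (L j).eval (τ i) = if i = j then 1 else 0)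
    {p : R[X]} (hp : p.natDegree < Fintype.card ι) :
    p = ∑ k, C (p.eval (τ k)) * L k := by
  refine eq_of_natDegree_lt_card_of_eval_eq _ _ hτ (fun i => ?_) (max_lt hp ?_)
  · simp [eval_finsetSum, hL]
  · exact (natDegree_sum_le_of_forall_le _ _ fun k _ =>
      (natDegree_C_mul_le _ _).trans (Nat.le_sub_one_of_lt (hLdeg k))).trans_lt
      (Nat.sub_one_lt (Nat.zero_lt_of_lt hp).ne')

theorem eval_derivative_eq_sum_of_lagrange (hτ : Function.Injective τ)
    (hLdeg : ∀ j, (L j).natDegree < Fintype.card ι)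
    (hL : ∀ i j, (L j).eval (τ i) = if i = j then 1 else 0)
    {p : R[X]} (hp : p.natDegree < Fintype.card ι) (x : R) :
    (derivative p).eval x = ∑ k, p.eval (τ k) * (derivative (L k)).eval x := by
  conv_lhs => rw [eq_sum_C_eval_mul_of_lagrange hτ hLdeg hL hp]
  simp [eval_finsetSum]

end Polynomial

theorem birkhoff_case_b_DbBb_eq_one_general
    (N : ℕ) (τ : Fin (N + 1) → ℝ) (hτ : StrictMono τ)
    (L B : Fin (N + 1) → Polynomial ℝ)
    (hLdeg : ∀ j, (L j).natDegree ≤ N)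
    (hL : ∀ i j, (L j).eval (τ i) = if i = j then 1 else 0)
    (hBdeg : ∀ j, (B j).natDegree ≤ N)
    (hBjN : ∀ j : Fin N, (B j.castSucc).eval (τ (Fin.last N)) = 0)
    (hBj' : ∀ i j : Fin N,
      (derivative (B j.castSucc)).eval (τ i.castSucc) = if i = j then 1 else 0) :
    (Matrix.of fun i j : Fin N => (derivative (L j.castSucc)).eval (τ i.castSucc)) *
      (Matrix.of fun i j : Fin N => (B j.castSucc).eval (τ i.castSucc)) = 1 := by
  have hcard : ∀ p : ℝ[X], p.natDegree ≤ N → p.natDegree < Fintype.card (Fin (N + 1)) :=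
    fun p hp => by simpa [Nat.lt_succ_iff] using hp
  ext i j
  have hexpand := eval_derivative_eq_sum_of_lagrange hτ.injective (fun k => hcard _ (hLdeg k))
    hL (hcard _ (hBdeg j.castSucc)) (τ i.castSucc)
  rw [hBj' i j, Fin.sum_univ_castSucc, hBjN j, zero_mul, add_zero] at hexpand
  simp only [Matrix.mul_apply, Matrix.one_apply, Matrix.of_apply, hexpand, mul_comm]

/-- Theorem 1 (Wang–Samson–Zhao), Case (b): for a Case-(b) Birkhoff basis
`B₀,…,B_N` and Lagrange basis `L₀,…,L_N` on nodes `τ₀ < ⋯ < τ_N`,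
the matrices `D_b := (L_j'(τ_i))_{0≤i,j≤N-1}` and `B_b := (B_j(τ_i))_{0≤i,j≤N-1}`
satisfy `D_b * B_b = I_N`. -/
theorem birkhoff_case_b_DbBb_eq_one
    (N : ℕ) (hN : 1 ≤ N) (τ : Fin (N + 1) → ℝ) (hτ : StrictMono τ)
    (L B : Fin (N + 1) → Polynomial ℝ)
    (hLdeg : ∀ j, (L j).natDegree ≤ N)
    (hL : ∀ i j, (L j).eval (τ i) = if i = j then 1 else 0)
    (hBdeg : ∀ j, (B j).natDegree ≤ N)
    (hBNN : (B (Fin.last N)).eval (τ (Fin.last N)) = 1)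
    (hBjN : ∀ j : Fin N, (B j.castSucc).eval (τ (Fin.last N)) = 0)
    (hBN' : ∀ i : Fin N, (derivative (B (Fin.last N))).eval (τ i.castSucc) = 0)
    (hBj' : ∀ i j : Fin N,
      (derivative (B j.castSucc)).eval (τ i.castSucc) = if i = j then 1 else 0) :
    (Matrix.of fun i j : Fin N => (derivative (L j.castSucc)).eval (τ i.castSucc)) *
      (Matrix.of fun i j : Fin N => (B j.castSucc).eval (τ i.castSucc)) = 1 :=
  birkhoff_case_b_DbBb_eq_one_general N τ hτ L B hLdeg hL hBdeg hBjN hBj'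
end

section
/- Let N ≥ 1, let τ_0 < τ_1 < ... < τ_N be real numbers, and let B_0,...,B_N be a Case-(a) Birkhoff basis for these nodes. Define the N×N matrix D_a := (L_j'(τ_i))_{1≤i,j≤N}, the vector b_0 := (B_0(τ_1),...,B_0(τ_N))ᵀ ∈ ℝ^N, and the vector l_0 := (L_0'(τ_1),...,L_0'(τ_N))ᵀ ∈ ℝ^N. Then D_a · b_0 + l_0 = 0, i.e., for every i = 1,...,N one has Σ_{k=1}^{N} L_k'(τ_i)·B_0(τ_k) + L_0'(τ_i) = 0. -/
/-!
`B₀` has degree `≤ N`, so it equals its Lagrange interpolant `∑ⱼ B₀(τⱼ) Lⱼ`. Differentiating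
at `τᵢ` (`i ≥ 1`), where `B₀'` vanishes, and splitting off the `j = 0` term, whose coefficient
is `B₀(τ₀) = 1`, gives `0 = L₀'(τᵢ) + ∑ₖ Lₖ'(τᵢ) B₀(τₖ)`.
-/

open Polynomial Matrix

namespace Polynomial

variable {R ι : Type*} [CommRing R] [IsDomain R] [Fintype ι] [DecidableEq ι]
  {τ : ι → R} {L : ι → R[X]} {n : ℕ}

theorem eq_sum_eval_mul_of_isLagrangeBasis (hτ : Function.Injective τ)
    (hL : ∀ i j, (L j).eval (τ i) = if i = j then 1 else 0)
    (hLdeg : ∀ j, (L j).natDegree ≤ n) (hn : n < Fintype.card ι)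
    {p : R[X]} (hp : p.natDegree ≤ n) :
    p = ∑ j, C (p.eval (τ j)) * L j := by
  refine sub_eq_zero.mp <| eq_zero_of_natDegree_lt_card_of_eval_eq_zero _ hτ (fun i ↦ ?_) ?_
  · simp [eval_finsetSum, hL]
  · refine (natDegree_sub_le _ _).trans_lt (max_le hp ?_ |>.trans_lt hn)
    exact natDegree_sum_le_of_forall_le _ _ fun j _ ↦
      natDegree_C_mul_le _ _ |>.trans (hLdeg j)

theorem eval_derivative_eq_sum_of_isLagrangeBasis (hτ : Function.Injective τ)
    (hL : ∀ i j, (L j).eval (τ i) = if i = j then 1 else 0)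
    (hLdeg : ∀ j, (L j).natDegree ≤ n) (hn : n < Fintype.card ι)
    {p : R[X]} (hp : p.natDegree ≤ n) (x : R) :
    (derivative p).eval x = ∑ j, (derivative (L j)).eval x * p.eval (τ j) := by
  conv_lhs => rw [eq_sum_eval_mul_of_isLagrangeBasis hτ hL hLdeg hn hp]
  simp [eval_finsetSum, mul_comm]

end Polynomial

theorem birkhoff_case_a_Da_b0_add_l0_eq_zero_general
    (N : ℕ) (τ : Fin (N + 1) → ℝ) (hτ : StrictMono τ)
    (L B : Fin (N + 1) → Polynomial ℝ)
    (hLdeg : ∀ j, (L j).natDegree ≤ N)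
    (hL : ∀ i j, (L j).eval (τ i) = if i = j then 1 else 0)
    (hBdeg : ∀ j, (B j).natDegree ≤ N)
    (hB00 : (B 0).eval (τ 0) = 1)
    (hB0' : ∀ i : Fin N, (derivative (B 0)).eval (τ i.succ) = 0) :
    (Matrix.of fun i j : Fin N => (derivative (L j.succ)).eval (τ i.succ)).mulVec
        (fun k : Fin N => (B 0).eval (τ k.succ)) +
      (fun i : Fin N => (derivative (L 0)).eval (τ i.succ)) = 0 := by
  funext i
  have key := eval_derivative_eq_sum_of_isLagrangeBasis hτ.injective hL hLdeg
    (by simp) (hBdeg 0) (τ i.succ)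
  rw [hB0' i, Fin.sum_univ_succ, hB00, mul_one] at key
  simp only [Pi.add_apply, Pi.zero_apply, mulVec, dotProduct, of_apply]
  linarith

/-- Proposition 2 (Case (a)): `D_a · b₀ + l₀ = 0`, i.e. for every `i = 1,…,N`,
`Σ_{k=1}^N L_k'(τ_i)·B₀(τ_k) + L₀'(τ_i) = 0`. -/
theorem birkhoff_case_a_Da_b0_add_l0_eq_zero
    (N : ℕ) (hN : 1 ≤ N) (τ : Fin (N + 1) → ℝ) (hτ : StrictMono τ)
    (L B : Fin (N + 1) → Polynomial ℝ)
    (hLdeg : ∀ j, (L j).natDegree ≤ N)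
    (hL : ∀ i j, (L j).eval (τ i) = if i = j then 1 else 0)
    (hBdeg : ∀ j, (B j).natDegree ≤ N)
    (hB00 : (B 0).eval (τ 0) = 1)
    (hBj0 : ∀ j : Fin N, (B j.succ).eval (τ 0) = 0)
    (hB0' : ∀ i : Fin N, (derivative (B 0)).eval (τ i.succ) = 0)
    (hBj' : ∀ i j : Fin N,
      (derivative (B j.succ)).eval (τ i.succ) = if i = j then 1 else 0) :
    (Matrix.of fun i j : Fin N => (derivative (L j.succ)).eval (τ i.succ)).mulVec
        (fun k : Fin N => (B 0).eval (τ k.succ)) +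
      (fun i : Fin N => (derivative (L 0)).eval (τ i.succ)) = 0 :=
  birkhoff_case_a_Da_b0_add_l0_eq_zero_general N τ hτ L B hLdeg hL hBdeg hB00 hB0'
end

section
/- Let N ≥ 1, let τ_0 < τ_1 < ... < τ_N be real numbers, and let B_0,...,B_N be a Case-(a) Birkhoff basis for these nodes. Define the N×N matrix B_a := (B_j(τ_i))_{1≤i,j≤N}, the vector b_0 := (B_0(τ_1),...,B_0(τ_N))ᵀ ∈ ℝ^N, and the vector l_0 := (L_0'(τ_1),...,L_0'(τ_N))ᵀ ∈ ℝ^N. Then b_0 = −B_a · l_0. -/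
/-!
Every polynomial `p` of degree at most `N` has the Birkhoff expansion
`p = p(τ₀) B₀ + ∑ₖ p'(τₖ) Bₖ`: the difference of the two sides has degree at most `N`, vanishes at
`τ₀`, and its derivative, of degree below `N`, vanishes at the `N` nodes `τ₁, …, τ_N`, so it is
zero. For `p = L₀`, evaluating the expansion at `τ₁, …, τ_N`, where `L₀` vanishes, gives the claim.
-/

open Polynomial Matrix

namespace Polynomial

variable {R : Type*} [CommRing R] [IsDomain R] [CharZero R]

theorem eq_zero_of_eval_eq_zero_of_derivative_eval_eq_zero {ι : Type*} [Fintype ι] {p : R[X]}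
    (hp : p.natDegree ≤ Fintype.card ι) {x₀ : R} (h₀ : p.eval x₀ = 0) {x : ι → R}
    (hx : Function.Injective x) (hx' : ∀ i, (derivative p).eval (x i) = 0) : p = 0 := by
  have hconst : derivative p = 0 := by
    rcases eq_or_ne p.natDegree 0 with h | h
    · exact derivative_eq_zero.mpr h
    · exact eq_zero_of_natDegree_lt_card_of_eval_eq_zero _ hx hx'
        (by rw [natDegree_derivative]; omega)
  rw [eq_C_of_derivative_eq_zero hconst] at h₀ ⊢
  rw [eval_C] at h₀
  rw [h₀, map_zero]

end Polynomial

section BirkhoffBasis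

variable {R : Type*} [CommRing R] {n : ℕ}

structure IsBirkhoffBasisCaseA (τ : Fin (n + 1) → R) (B : Fin (n + 1) → R[X]) : Prop where
  natDegree_le : ∀ j, (B j).natDegree ≤ n
  eval_zero : (B 0).eval (τ 0) = 1
  eval_succ : ∀ j : Fin n, (B j.succ).eval (τ 0) = 0
  derivative_zero_eval : ∀ i : Fin n, (derivative (B 0)).eval (τ i.succ) = 0
  derivative_succ_eval : ∀ i j : Fin n,
    (derivative (B j.succ)).eval (τ i.succ) = if i = j then 1 else 0

namespace IsBirkhoffBasisCaseA

variable {τ : Fin (n + 1) → R} {B : Fin (n + 1) → R[X]}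

theorem eq_expansion [IsDomain R] [CharZero R] (hB : IsBirkhoffBasisCaseA τ B)
    (hτ : Function.Injective τ) {p : R[X]} (hp : p.natDegree ≤ n) :
    p = C (p.eval (τ 0)) * B 0 + ∑ k : Fin n, C ((derivative p).eval (τ k.succ)) * B k.succ := by
  rw [← sub_eq_zero]
  refine eq_zero_of_eval_eq_zero_of_derivative_eval_eq_zero (x₀ := τ 0)
    (x := fun i : Fin n => τ i.succ) ?_ ?_ (hτ.comp (Fin.succ_injective n)) fun i => ?_
  · rw [Fintype.card_fin]
    refine (natDegree_sub_le _ _).trans (max_le hp ((natDegree_add_le _ _).trans (max_le ?_ ?_)))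
    · exact (natDegree_C_mul_le _ _).trans (hB.natDegree_le 0)
    · exact natDegree_sum_le_of_forall_le _ _
        fun k _ => (natDegree_C_mul_le _ _).trans (hB.natDegree_le k.succ)
  · simp [eval_finsetSum, hB.eval_zero, hB.eval_succ]
  · simp [eval_finsetSum, hB.derivative_zero_eval, hB.derivative_succ_eval]

end IsBirkhoffBasisCaseA

end BirkhoffBasis

theorem birkhoff_case_a_b0_eq_neg_Ba_l0_general
    (N : ℕ) (τ : Fin (N + 1) → ℝ) (hτ : StrictMono τ)
    (L B : Fin (N + 1) → Polynomial ℝ)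
    (hLdeg : ∀ j, (L j).natDegree ≤ N)
    (hL : ∀ i j, (L j).eval (τ i) = if i = j then 1 else 0)
    (hBdeg : ∀ j, (B j).natDegree ≤ N)
    (hB00 : (B 0).eval (τ 0) = 1)
    (hBj0 : ∀ j : Fin N, (B j.succ).eval (τ 0) = 0)
    (hB0' : ∀ i : Fin N, (derivative (B 0)).eval (τ i.succ) = 0)
    (hBj' : ∀ i j : Fin N,
      (derivative (B j.succ)).eval (τ i.succ) = if i = j then 1 else 0) :
    (fun i : Fin N => (B 0).eval (τ i.succ)) =
      -(Matrix.of fun i j : Fin N => (B j.succ).eval (τ i.succ)).mulVec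
        (fun k : Fin N => (derivative (L 0)).eval (τ k.succ)) := by
  have hB : IsBirkhoffBasisCaseA τ B := ⟨hBdeg, hB00, hBj0, hB0', hBj'⟩
  have hexp := hB.eq_expansion hτ.injective (hLdeg 0)
  funext i
  have hvanish := congrArg (eval (τ i.succ)) hexp
  simp only [hL, Fin.succ_ne_zero, if_false, if_true, eval_add, eval_mul, eval_C, one_mul,
    eval_finsetSum] at hvanish
  simp only [Pi.neg_apply, mulVec, dotProduct, of_apply, mul_comm (eval (τ i.succ) (B _))]
  linarith

/-- Case (a): the vector `b₀ := (B₀(τ_1),…,B₀(τ_N))ᵀ` satisfies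
`b₀ = −B_a · l₀` where `B_a := (B_j(τ_i))_{1≤i,j≤N}` and
`l₀ := (L₀'(τ_1),…,L₀'(τ_N))ᵀ`. -/
theorem birkhoff_case_a_b0_eq_neg_Ba_l0
    (N : ℕ) (hN : 1 ≤ N) (τ : Fin (N + 1) → ℝ) (hτ : StrictMono τ)
    (L B : Fin (N + 1) → Polynomial ℝ)
    (hLdeg : ∀ j, (L j).natDegree ≤ N)
    (hL : ∀ i j, (L j).eval (τ i) = if i = j then 1 else 0)
    (hBdeg : ∀ j, (B j).natDegree ≤ N)
    (hB00 : (B 0).eval (τ 0) = 1)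
    (hBj0 : ∀ j : Fin N, (B j.succ).eval (τ 0) = 0)
    (hB0' : ∀ i : Fin N, (derivative (B 0)).eval (τ i.succ) = 0)
    (hBj' : ∀ i j : Fin N,
      (derivative (B j.succ)).eval (τ i.succ) = if i = j then 1 else 0) :
    (fun i : Fin N => (B 0).eval (τ i.succ)) =
      -(Matrix.of fun i j : Fin N => (B j.succ).eval (τ i.succ)).mulVec
        (fun k : Fin N => (derivative (L 0)).eval (τ k.succ)) :=
  birkhoff_case_a_b0_eq_neg_Ba_l0_general N τ hτ L B hLdeg hL hBdeg hB00 hBj0 hB0' hBj'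
end

section
/- Let N ≥ 1, let τ_0 < τ_1 < ... < τ_N be real numbers, and let B_0,...,B_N be a Case-(a) Birkhoff basis for these nodes. Define B_a := (B_j(τ_i))_{1≤i,j≤N}, b_0 := (B_0(τ_1),...,B_0(τ_N))ᵀ, l_0 := (L_0'(τ_1),...,L_0'(τ_N))ᵀ, and the row vector I_a := (B_1'(τ_0),...,B_N'(τ_0)). Fix real numbers x_0 and F_0, and vectors X_a = (x_1,...,x_N)ᵀ ∈ ℝ^N and F ∈ ℝ^N. Then there exists V_a ∈ ℝ^N satisfying the three conditions (i) V_a = F, (ii) X_a = x_0·b_0 + B_a·V_a, and (iii) I_a·V_a = F_0 − x_0·B_0'(τ_0), if and only if the two conditions (i') Σ_{i=0}^{N} x_i·L_i'(τ_0) = F_0 and (ii') X_a = B_a·F − x_0·B_a·l_0 hold. -/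
/-!
Write `P = x₀ B₀ + ∑ⱼ Fⱼ Bⱼ`. Then `P(τ₀) = x₀`, condition (ii) says that `X_a` lists the values
of `P` at `τ₁, …, τ_N`, and (iii) says `P'(τ₀) = F₀`. Differentiating the Lagrange expansion
`P = ∑ᵢ P(τᵢ) Lᵢ` gives `P'(τ₀) = ∑ᵢ xᵢ Lᵢ'(τ₀)`, which turns (iii) into (i'). Expanding `L₀` in
the Birkhoff basis gives `L₀ = B₀ + ∑ⱼ L₀'(τⱼ) Bⱼ`; evaluated at `τ₁, …, τ_N` this is
`b₀ = -B_a l₀`, which turns (ii) into (ii').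

Both expansions come from uniqueness. For the Birkhoff data, if `q(τ₀) = 0` and `q'` vanishes at
the `N` nodes `τ₁, …, τ_N`, then `deg q' < N` forces `q' = 0`, so `q` is the constant `q(τ₀) = 0`.
-/

open Polynomial Matrix

namespace Polynomial

theorem natDegree_sum_smul_le {R ι : Type*} [Semiring R] {n : ℕ} (s : Finset ι) (c : ι → R)
    {p : ι → R[X]} (hp : ∀ i, (p i).natDegree ≤ n) : (∑ i ∈ s, c i • p i).natDegree ≤ n :=
  natDegree_sum_le_of_forall_le _ _ fun i _ => (natDegree_smul_le _ _).trans (hp i)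

variable {R : Type*} [CommRing R] [IsDomain R] {n : ℕ} {τ : Fin (n + 1) → R}

section Lagrange

variable {L : Fin (n + 1) → R[X]} (hτ : Function.Injective τ)
  (hLdeg : ∀ j, (L j).natDegree ≤ n) (hL : ∀ i j, (L j).eval (τ i) = if i = j then 1 else 0)
include hτ hLdeg hL

theorem eq_sum_eval_smul_of_lagrange {p : R[X]} (hp : p.natDegree ≤ n) :
    p = ∑ i, p.eval (τ i) • L i := by
  refine eq_of_natDegree_lt_card_of_eval_eq _ _ hτ (fun k => ?_) ?_
  · simp [eval_finsetSum, hL]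
  · simpa [Nat.lt_succ_iff] using ⟨hp, natDegree_sum_smul_le _ _ hLdeg⟩

theorem eval_derivative_eq_sum_of_lagrange_s8 {p : R[X]} (hp : p.natDegree ≤ n) (s : R) :
    (derivative p).eval s = ∑ i, p.eval (τ i) * (derivative (L i)).eval s := by
  conv_lhs => rw [eq_sum_eval_smul_of_lagrange hτ hLdeg hL hp]
  simp [eval_finsetSum]

end Lagrange

section Birkhoff

variable [IsAddTorsionFree R] (hτ : Function.Injective τ)
include hτ

theorem eq_zero_of_eval_zero_of_derivative_eval_succ_eq_zero {q : R[X]} (hq : q.natDegree ≤ n)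
    (h₀ : q.eval (τ 0) = 0) (h' : ∀ i : Fin n, (derivative q).eval (τ i.succ) = 0) : q = 0 := by
  rcases eq_or_ne q 0 with rfl | hq₀
  · rfl
  have hd : derivative q = 0 := by
    refine eq_zero_of_degree_lt_of_eval_index_eq_zero Finset.univ
      (hτ.comp (Fin.succ_injective n)).injOn ?_ fun i _ => h' i
    calc (derivative q).degree < q.degree := degree_derivative_lt hq₀
      _ ≤ n := degree_le_of_natDegree_le hq
      _ = Finset.univ.card := by simp
  rw [eq_C_of_derivative_eq_zero hd] at h₀ ⊢
  simpa using h₀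

variable {B : Fin (n + 1) → R[X]} (hBdeg : ∀ j, (B j).natDegree ≤ n)
  (hB00 : (B 0).eval (τ 0) = 1) (hBj0 : ∀ j : Fin n, (B j.succ).eval (τ 0) = 0)
  (hB0' : ∀ i : Fin n, (derivative (B 0)).eval (τ i.succ) = 0)
  (hBj' : ∀ i j : Fin n, (derivative (B j.succ)).eval (τ i.succ) = if i = j then 1 else 0)
include hBdeg hB00 hBj0 hB0' hBj'

theorem eq_eval_smul_add_sum_of_birkhoff {p : R[X]} (hp : p.natDegree ≤ n) :
    p = p.eval (τ 0) • B 0 + ∑ j : Fin n, (derivative p).eval (τ j.succ) • B j.succ := by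
  rw [← sub_eq_zero]
  refine eq_zero_of_eval_zero_of_derivative_eval_succ_eq_zero hτ ?_ ?_ fun i => ?_
  · refine (natDegree_sub_le _ _).trans (max_le hp ((natDegree_add_le _ _).trans ?_))
    exact max_le ((natDegree_smul_le _ _).trans (hBdeg 0))
      (natDegree_sum_smul_le _ _ fun j => hBdeg _)
  · simp [eval_finsetSum, hB00, hBj0]
  · simp [eval_finsetSum, hB0', hBj']

theorem eval_succ_birkhoff_zero_eq_neg_mulVec {ℓ : R[X]} (hℓdeg : ℓ.natDegree ≤ n)
    (hℓ : ∀ i, ℓ.eval (τ i) = if i = 0 then 1 else 0) :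
    (fun k : Fin n => (B 0).eval (τ k.succ)) =
      -(Matrix.of fun i j : Fin n => (B j.succ).eval (τ i.succ)) *ᵥ
        fun k : Fin n => (derivative ℓ).eval (τ k.succ) := by
  funext k
  have hk := congrArg (eval (τ k.succ))
    (eq_eval_smul_add_sum_of_birkhoff hτ hBdeg hB00 hBj0 hB0' hBj' hℓdeg)
  simp only [hℓ, Fin.succ_ne_zero, ↓reduceIte, one_smul, eval_add, eval_finsetSum, eval_smul,
    smul_eq_mul, mul_comm] at hk
  simp only [mulVec, dotProduct, Matrix.neg_apply, of_apply, neg_mul, Finset.sum_neg_distrib]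
  linear_combination -hk

end Birkhoff

/-- Both sides are `P'(τ₀)` for `P = c • B 0 + ∑ⱼ vⱼ • B j.succ`, whose node values are `c` and
`c • b₀ + B_a v`. -/
theorem lagrange_derivative_of_birkhoff_combination (hτ : Function.Injective τ)
    {L B : Fin (n + 1) → R[X]}
    (hLdeg : ∀ j, (L j).natDegree ≤ n) (hL : ∀ i j, (L j).eval (τ i) = if i = j then 1 else 0)
    (hBdeg : ∀ j, (B j).natDegree ≤ n)
    (hB00 : (B 0).eval (τ 0) = 1) (hBj0 : ∀ j : Fin n, (B j.succ).eval (τ 0) = 0)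
    (c : R) (v : Fin n → R) :
    c * (derivative (L 0)).eval (τ 0) + ∑ i : Fin n,
      (c • (fun i : Fin n => (B 0).eval (τ i.succ)) +
        (Matrix.of fun i j : Fin n => (B j.succ).eval (τ i.succ)) *ᵥ v) i *
        (derivative (L i.succ)).eval (τ 0) =
      c * (derivative (B 0)).eval (τ 0) +
        (fun j : Fin n => (derivative (B j.succ)).eval (τ 0)) ⬝ᵥ v := by
  set P := c • B 0 + ∑ j, v j • B j.succ
  have hP := eval_derivative_eq_sum_of_lagrange_s8 hτ hLdeg hL (p := P)
    (natDegree_add_le_of_degree_le ((natDegree_smul_le _ _).trans (hBdeg 0))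
      (natDegree_sum_smul_le _ _ fun j => hBdeg _)) (τ 0)
  rw [Fin.sum_univ_succ] at hP
  simp only [derivative_add, map_smul, map_sum, eval_add, eval_smul, smul_eq_mul, eval_finsetSum,
    hB00, mul_one, hBj0, mul_zero, Finset.sum_const_zero, add_zero, P] at hP
  simpa [mulVec, dotProduct, mul_comm] using hP.symm

end Polynomial

theorem birkhoff_right_precond_iff_left_precond_case_a_general
    (N : ℕ) (τ : Fin (N + 1) → ℝ) (hτ : StrictMono τ)
    (L B : Fin (N + 1) → Polynomial ℝ)
    (hLdeg : ∀ j, (L j).natDegree ≤ N)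
    (hL : ∀ i j, (L j).eval (τ i) = if i = j then 1 else 0)
    (hBdeg : ∀ j, (B j).natDegree ≤ N)
    (hB00 : (B 0).eval (τ 0) = 1)
    (hBj0 : ∀ j : Fin N, (B j.succ).eval (τ 0) = 0)
    (hB0' : ∀ i : Fin N, (derivative (B 0)).eval (τ i.succ) = 0)
    (hBj' : ∀ i j : Fin N,
      (derivative (B j.succ)).eval (τ i.succ) = if i = j then 1 else 0)
    (x0 F0 : ℝ) (Xa F : Fin N → ℝ) :
    (∃ Va : Fin N → ℝ,
      Va = F ∧
      Xa = x0 • (fun i : Fin N => (B 0).eval (τ i.succ)) +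
        (Matrix.of fun i j : Fin N => (B j.succ).eval (τ i.succ)).mulVec Va ∧
      (fun j : Fin N => (derivative (B j.succ)).eval (τ 0)) ⬝ᵥ Va =
        F0 - x0 * (derivative (B 0)).eval (τ 0)) ↔
    (x0 * (derivative (L 0)).eval (τ 0) +
        ∑ i : Fin N, Xa i * (derivative (L i.succ)).eval (τ 0) = F0 ∧
      Xa = (Matrix.of fun i j : Fin N => (B j.succ).eval (τ i.succ)).mulVec F -
        x0 • (Matrix.of fun i j : Fin N => (B j.succ).eval (τ i.succ)).mulVec
          (fun k : Fin N => (derivative (L 0)).eval (τ k.succ))) := by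
  have hb₀ := eval_succ_birkhoff_zero_eq_neg_mulVec hτ.injective hBdeg hB00 hBj0 hB0' hBj'
    (hLdeg 0) fun i => hL i 0
  have hF₀ := lagrange_derivative_of_birkhoff_combination hτ.injective hLdeg hL hBdeg hB00 hBj0
    x0 F
  set Ba := Matrix.of fun i j : Fin N => (B j.succ).eval (τ i.succ)
  have hXa : x0 • (fun i : Fin N => (B 0).eval (τ i.succ)) + Ba *ᵥ F =
      Ba *ᵥ F - x0 • Ba *ᵥ fun k : Fin N => (derivative (L 0)).eval (τ k.succ) := by
    rw [hb₀, Matrix.neg_mulVec, smul_neg]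
    abel
  rw [hXa] at hF₀
  simp only [exists_eq_left, hXa]
  constructor
  · rintro ⟨rfl, hIa⟩
    exact ⟨by rw [hF₀, hIa]; ring, rfl⟩
  · rintro ⟨hF₀', rfl⟩
    exact ⟨rfl, by linarith⟩

/-- Proposition 3: eliminating `V_a` from the right-preconditioned problem
reduces it to the left-preconditioned problem.  There exists `V_a` with
(i) `V_a = F`, (ii) `X_a = x₀·b₀ + B_a·V_a`, (iii) `I_a·V_a = F₀ − x₀·B₀'(τ₀)`
iff (i') `Σ_{i=0}^N x_i·L_i'(τ₀) = F₀` and (ii') `X_a = B_a·F − x₀·B_a·l₀`. -/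
theorem birkhoff_right_precond_iff_left_precond_case_a
    (N : ℕ) (hN : 1 ≤ N) (τ : Fin (N + 1) → ℝ) (hτ : StrictMono τ)
    (L B : Fin (N + 1) → Polynomial ℝ)
    (hLdeg : ∀ j, (L j).natDegree ≤ N)
    (hL : ∀ i j, (L j).eval (τ i) = if i = j then 1 else 0)
    (hBdeg : ∀ j, (B j).natDegree ≤ N)
    (hB00 : (B 0).eval (τ 0) = 1)
    (hBj0 : ∀ j : Fin N, (B j.succ).eval (τ 0) = 0)
    (hB0' : ∀ i : Fin N, (derivative (B 0)).eval (τ i.succ) = 0)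
    (hBj' : ∀ i j : Fin N,
      (derivative (B j.succ)).eval (τ i.succ) = if i = j then 1 else 0)
    (x0 F0 : ℝ) (Xa F : Fin N → ℝ) :
    (∃ Va : Fin N → ℝ,
      Va = F ∧
      Xa = x0 • (fun i : Fin N => (B 0).eval (τ i.succ)) +
        (Matrix.of fun i j : Fin N => (B j.succ).eval (τ i.succ)).mulVec Va ∧
      (fun j : Fin N => (derivative (B j.succ)).eval (τ 0)) ⬝ᵥ Va =
        F0 - x0 * (derivative (B 0)).eval (τ 0)) ↔
    (x0 * (derivative (L 0)).eval (τ 0) +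
        ∑ i : Fin N, Xa i * (derivative (L i.succ)).eval (τ 0) = F0 ∧
      Xa = (Matrix.of fun i j : Fin N => (B j.succ).eval (τ i.succ)).mulVec F -
        x0 • (Matrix.of fun i j : Fin N => (B j.succ).eval (τ i.succ)).mulVec
          (fun k : Fin N => (derivative (L 0)).eval (τ k.succ))) :=
  birkhoff_right_precond_iff_left_precond_case_a_general N τ hτ L B hLdeg hL hBdeg hB00 hBj0 hB0'
    hBj' x0 F0 Xa F
end

section
/- Let N ≥ 1 and let τ_0 < τ_1 < ... < τ_N be real numbers. For any real numbers c, d_0,...,d_{N−1} there exists a unique real polynomial p of degree ≤ N such that p(τ_N) = c and p'(τ_j) = d_j for j = 0,...,N−1. -/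
/-!
The derivative of such a `p` has degree `< N` and is prescribed at the `N` distinct nodes
`τ₀, …, τ_{N-1}`, so it must be the Lagrange interpolant `q` of the data `d`. Conversely, an
antiderivative of `q` of degree `≤ N` has the right derivative, and adding a constant fixes the
value at `τ_N`; two polynomials with equal derivatives that agree at one point are equal.
-/

open Polynomial Finset

namespace Polynomial

theorem degree_derivative_lt_of_natDegree_le {R : Type*} [Semiring R] [IsAddTorsionFree R]
    {p : R[X]} {n : ℕ} (hp : p.natDegree ≤ n) : (derivative p).degree < n := by
  by_cases hp' : derivative p = 0
  · simp [hp']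
  · have : p.natDegree ≠ 0 := derivative_ne_zero.mp hp'
    rw [degree_eq_natDegree hp', natDegree_derivative]
    exact_mod_cast (by omega : p.natDegree - 1 < n)

theorem eq_of_derivative_eq_of_eval_eq {R : Type*} [Ring R] [IsAddTorsionFree R] {p q : R[X]}
    (hd : derivative p = derivative q) {x : R} (hx : p.eval x = q.eval x) : p = q := by
  have hconst : p - q = C ((p - q).coeff 0) :=
    eq_C_of_derivative_eq_zero (by rw [derivative_sub, hd, sub_self])
  have hcoeff : (p - q).coeff 0 = 0 := by
    simpa [hx] using (congrArg (eval x) hconst).symm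
  rw [← sub_eq_zero, hconst, hcoeff, map_zero]

variable {K : Type*} [Field K] [CharZero K]

theorem exists_natDegree_le_derivative_eq {n : ℕ} {q : K[X]} (hq : q.degree < n) :
    ∃ P : K[X], P.natDegree ≤ n ∧ derivative P = q := by
  refine ⟨∑ i ∈ range n, monomial (i + 1) (q.coeff i / (i + 1)), ?_, ?_⟩
  · exact natDegree_sum_le_of_forall_le _ _ fun i hi =>
      (natDegree_monomial_le _).trans (mem_range.mp hi)
  · have hmonomial (i : ℕ) :
        derivative (monomial (i + 1) (q.coeff i / (i + 1))) = monomial i (q.coeff i) := by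
      rw [derivative_monomial, Nat.add_sub_cancel, Nat.cast_add_one,
        div_mul_cancel₀ _ (Nat.cast_add_one_ne_zero i)]
    ext m
    simp only [map_sum, hmonomial, finsetSum_coeff, coeff_monomial, sum_ite_eq', mem_range]
    split_ifs with hm
    · rfl
    · exact (coeff_eq_zero_of_degree_lt (hq.trans_le (by exact_mod_cast not_lt.mp hm))).symm

theorem existsUnique_natDegree_le_eval_eq_derivative_eval_eq {ι : Type*} [DecidableEq ι]
    {s : Finset ι} {v : ι → K} (hvs : Set.InjOn v s) (x₀ c : K) (d : ι → K) :
    ∃! p : K[X], p.natDegree ≤ #s ∧ p.eval x₀ = c ∧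
      ∀ i ∈ s, (derivative p).eval (v i) = d i := by
  have hinterpolate : ∀ i ∈ s, (Lagrange.interpolate s v d).eval (v i) = d i :=
    fun _ hi => Lagrange.eval_interpolate_at_node d hvs hi
  obtain ⟨P, hPdeg, hP⟩ :=
    exists_natDegree_le_derivative_eq (Lagrange.degree_interpolate_lt d hvs)
  have hPdeg' : (P + C (c - P.eval x₀)).natDegree ≤ #s := by rwa [natDegree_add_C]
  refine ⟨P + C (c - P.eval x₀), ⟨hPdeg', by simp, fun i hi => ?_⟩, ?_⟩
  · simpa [hP] using hinterpolate i hi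
  rintro p ⟨hpdeg, hpx₀, hpd⟩
  refine eq_of_derivative_eq_of_eval_eq ?_ (x := x₀) (by simp [hpx₀])
  refine eq_of_degree_sub_lt_of_eval_index_eq s hvs ?_ fun i hi => ?_
  · rw [← derivative_sub]
    exact degree_derivative_lt_of_natDegree_le
      ((natDegree_sub_le _ _).trans (max_le hpdeg hPdeg'))
  · simpa [hP, hpd i hi] using (hinterpolate i hi).symm

end Polynomial

theorem birkhoff_interpolant_case_b_existsUnique_general
    (N : ℕ) (τ : Fin (N + 1) → ℝ) (hτ : StrictMono τ)
    (c : ℝ) (d : Fin N → ℝ) :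
    ∃! p : Polynomial ℝ, p.natDegree ≤ N ∧ p.eval (τ (Fin.last N)) = c ∧
      ∀ j : Fin N, (derivative p).eval (τ j.castSucc) = d j := by
  have hnodes : Set.InjOn (fun j : Fin N => τ j.castSucc) (univ : Finset (Fin N)) :=
    (hτ.injective.comp (Fin.castSucc_injective N)).injOn
  simpa using existsUnique_natDegree_le_eval_eq_derivative_eval_eq hnodes (τ (Fin.last N)) c d

/-- Existence and uniqueness of the Case-(b) Birkhoff interpolant: for nodes
`τ₀ < τ₁ < ⋯ < τ_N` and data `c, d₀,…,d_{N−1}`, there is a unique polynomial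
`p` of degree ≤ N with `p(τ_N) = c` and `p'(τ_j) = d_j` for `j = 0,…,N−1`. -/
theorem birkhoff_interpolant_case_b_existsUnique
    (N : ℕ) (hN : 1 ≤ N) (τ : Fin (N + 1) → ℝ) (hτ : StrictMono τ)
    (c : ℝ) (d : Fin N → ℝ) :
    ∃! p : Polynomial ℝ, p.natDegree ≤ N ∧ p.eval (τ (Fin.last N)) = c ∧
      ∀ j : Fin N, (derivative p).eval (τ j.castSucc) = d j :=
  birkhoff_interpolant_case_b_existsUnique_general N τ hτ c d
end

section
/- Let N ≥ 1, let τ_0 < τ_1 < ... < τ_N be real numbers, and let B_0,...,B_N be a Case-(a) Birkhoff basis for these nodes. Then for every real polynomial p of degree ≤ N one has the identity of polynomials p = p(τ_0)·B_0 + Σ_{j=1}^{N} p'(τ_j)·B_j. -/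
/-!
The difference `r` of `p` and its expansion has degree at most `N`, vanishes at `τ₀`, and its
derivative vanishes at the `N` distinct nodes `τ₁, …, τ_N`. As `r'` has degree below `N`, it is
zero, so `r` is a constant, namely `r(τ₀) = 0`.
-/

open Polynomial Finset

namespace Polynomial

variable {R ι : Type*} [CommRing R] [IsDomain R] [IsAddTorsionFree R] {f g : R[X]} {v : ι → R}

theorem eq_zero_of_degree_le_of_eval_eq_zero_of_derivative_eval_index_eq_zero (s : Finset ι)
    (hvs : Set.InjOn v s) (hdeg : f.degree ≤ #s) (a : R) (ha : f.eval a = 0)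
    (hder : ∀ i ∈ s, (derivative f).eval (v i) = 0) : f = 0 := by
  have hconst : derivative f = 0 := by
    refine eq_zero_of_degree_lt_of_eval_index_eq_zero s hvs ?_ hder
    rcases eq_or_ne f 0 with rfl | hf
    · simp
    · exact (degree_derivative_lt hf).trans_le hdeg
  rw [eq_C_of_derivative_eq_zero hconst] at ha ⊢
  rw [eval_C] at ha
  rw [ha, C_0]

theorem eq_of_eval_eq_of_derivative_eval_index_eq (s : Finset ι) (hvs : Set.InjOn v s)
    (hdeg : (f - g).degree ≤ #s) (a : R) (ha : f.eval a = g.eval a)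
    (hder : ∀ i ∈ s, (derivative f).eval (v i) = (derivative g).eval (v i)) : f = g := by
  rw [← sub_eq_zero]
  refine eq_zero_of_degree_le_of_eval_eq_zero_of_derivative_eval_index_eq_zero s hvs hdeg a
    (by rw [eval_sub, ha, sub_self]) fun i hi => ?_
  rw [derivative_sub, eval_sub, hder i hi, sub_self]

end Polynomial

theorem birkhoff_case_a_expansion_exact_general
    (N : ℕ) (τ : Fin (N + 1) → ℝ) (hτ : StrictMono τ)
    (B : Fin (N + 1) → Polynomial ℝ)
    (hBdeg : ∀ j, (B j).natDegree ≤ N)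
    (hB00 : (B 0).eval (τ 0) = 1)
    (hBj0 : ∀ j : Fin N, (B j.succ).eval (τ 0) = 0)
    (hB0' : ∀ i : Fin N, (derivative (B 0)).eval (τ i.succ) = 0)
    (hBj' : ∀ i j : Fin N,
      (derivative (B j.succ)).eval (τ i.succ) = if i = j then 1 else 0) :
    ∀ p : Polynomial ℝ, p.natDegree ≤ N →
      p = p.eval (τ 0) • B 0 +
        ∑ j : Fin N, ((derivative p).eval (τ j.succ)) • B j.succ := by
  intro p hp
  have mem_degreeLE_N {q : ℝ[X]} (hq : q.natDegree ≤ N) : q ∈ degreeLE ℝ N :=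
    mem_degreeLE.2 (natDegree_le_iff_degree_le.1 hq)
  have hexpansion : p.eval (τ 0) • B 0 + ∑ j : Fin N, ((derivative p).eval (τ j.succ)) • B j.succ
      ∈ degreeLE ℝ N :=
    add_mem (Submodule.smul_mem _ _ (mem_degreeLE_N (hBdeg 0)))
      (Submodule.sum_mem _ fun j _ => Submodule.smul_mem _ _ (mem_degreeLE_N (hBdeg j.succ)))
  refine eq_of_eval_eq_of_derivative_eval_index_eq (v := fun i : Fin N => τ i.succ) univ
    (hτ.injective.comp (Fin.succ_injective N)).injOn ?_ (τ 0) ?_ ?_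
  · rw [card_fin]
    exact mem_degreeLE.1 (sub_mem (mem_degreeLE_N hp) hexpansion)
  · simp [eval_finsetSum, hB00, hBj0]
  · intro i _
    simp [eval_finsetSum, hB0', hBj']

/-- Case (a): the Birkhoff expansion reproduces every polynomial of degree ≤ N:
`p = p(τ₀)·B₀ + Σ_{j=1}^N p'(τ_j)·B_j` as an identity of polynomials. -/
theorem birkhoff_case_a_expansion_exact
    (N : ℕ) (hN : 1 ≤ N) (τ : Fin (N + 1) → ℝ) (hτ : StrictMono τ)
    (B : Fin (N + 1) → Polynomial ℝ)
    (hBdeg : ∀ j, (B j).natDegree ≤ N)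
    (hB00 : (B 0).eval (τ 0) = 1)
    (hBj0 : ∀ j : Fin N, (B j.succ).eval (τ 0) = 0)
    (hB0' : ∀ i : Fin N, (derivative (B 0)).eval (τ i.succ) = 0)
    (hBj' : ∀ i j : Fin N,
      (derivative (B j.succ)).eval (τ i.succ) = if i = j then 1 else 0) :
    ∀ p : Polynomial ℝ, p.natDegree ≤ N →
      p = p.eval (τ 0) • B 0 +
        ∑ j : Fin N, ((derivative p).eval (τ j.succ)) • B j.succ :=
  birkhoff_case_a_expansion_exact_general N τ hτ B hBdeg hB00 hBj0 hB0' hBj'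
end

section
/- Let N ≥ 1, let τ_0 < τ_1 < ... < τ_N be real numbers, and let B_0,...,B_N be a Case-(b) Birkhoff basis for these nodes. Then for every real polynomial p of degree ≤ N one has the identity of polynomials p = Σ_{j=0}^{N−1} p'(τ_j)·B_j + p(τ_N)·B_N. -/
/-!
The difference `q` between `p` and its Birkhoff expansion has degree at most `N`, its derivative
vanishes at the `N` distinct nodes `τ_0, …, τ_{N-1}` and `q` itself vanishes at `τ_N`. A derivative
of degree `< N` with `N` roots is zero, so `q` is a constant, and that constant is `q(τ_N) = 0`.
-/

open Polynomial

namespace Polynomial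

variable {R : Type*}

theorem eq_zero_of_natDegree_le_card_of_derivative_eval_eq_zero [CommRing R] [IsDomain R]
    [IsAddTorsionFree R] {q : R[X]} (s : Finset R) (hdeg : q.natDegree ≤ s.card)
    (hs : ∀ x ∈ s, (derivative q).eval x = 0) {a : R} (ha : q.eval a = 0) : q = 0 := by
  have hderiv : derivative q = 0 := by
    by_contra hne
    have hq : q.natDegree ≠ 0 := fun h0 => hne (derivative_eq_zero.2 h0)
    exact hne (eq_zero_of_natDegree_lt_card_of_eval_eq_zero' _ s hs
      ((natDegree_derivative_lt hq).trans_le hdeg))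
  rw [eq_C_of_derivative_eq_zero hderiv] at ha ⊢
  rw [eval_C] at ha
  rw [ha, C_0]

section Birkhoff

variable [CommRing R] {N : ℕ} (τ : Fin (N + 1) → R) (B : Fin (N + 1) → R[X])

noncomputable def birkhoffExpansion (p : R[X]) : R[X] :=
  (∑ j : Fin N, (derivative p).eval (τ j.castSucc) • B j.castSucc) +
    p.eval (τ (Fin.last N)) • B (Fin.last N)

variable {τ B}

theorem natDegree_birkhoffExpansion_le {n : ℕ} (hB : ∀ j, (B j).natDegree ≤ n) (p : R[X]) :
    (birkhoffExpansion τ B p).natDegree ≤ n :=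
  (natDegree_add_le _ _).trans <| max_le
    (natDegree_sum_le_of_forall_le _ _ fun _ _ => (natDegree_smul_le _ _).trans (hB _))
    ((natDegree_smul_le _ _).trans (hB _))

theorem eval_last_birkhoffExpansion (hBNN : (B (Fin.last N)).eval (τ (Fin.last N)) = 1)
    (hBjN : ∀ j : Fin N, (B j.castSucc).eval (τ (Fin.last N)) = 0) (p : R[X]) :
    (birkhoffExpansion τ B p).eval (τ (Fin.last N)) = p.eval (τ (Fin.last N)) := by
  simp [birkhoffExpansion, eval_finsetSum, hBjN, hBNN]

theorem eval_derivative_birkhoffExpansion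
    (hBN' : ∀ i : Fin N, (derivative (B (Fin.last N))).eval (τ i.castSucc) = 0)
    (hBj' : ∀ i j : Fin N,
      (derivative (B j.castSucc)).eval (τ i.castSucc) = if i = j then 1 else 0)
    (p : R[X]) (i : Fin N) :
    (derivative (birkhoffExpansion τ B p)).eval (τ i.castSucc) =
      (derivative p).eval (τ i.castSucc) := by
  simp [birkhoffExpansion, eval_finsetSum, hBN', hBj']

end Birkhoff

end Polynomial

theorem birkhoff_case_b_expansion_exact_general
    (N : ℕ) (τ : Fin (N + 1) → ℝ) (hτ : StrictMono τ)
    (B : Fin (N + 1) → Polynomial ℝ)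
    (hBdeg : ∀ j, (B j).natDegree ≤ N)
    (hBNN : (B (Fin.last N)).eval (τ (Fin.last N)) = 1)
    (hBjN : ∀ j : Fin N, (B j.castSucc).eval (τ (Fin.last N)) = 0)
    (hBN' : ∀ i : Fin N, (derivative (B (Fin.last N))).eval (τ i.castSucc) = 0)
    (hBj' : ∀ i j : Fin N,
      (derivative (B j.castSucc)).eval (τ i.castSucc) = if i = j then 1 else 0) :
    ∀ p : Polynomial ℝ, p.natDegree ≤ N →
      p = (∑ j : Fin N, ((derivative p).eval (τ j.castSucc)) • B j.castSucc) +
        p.eval (τ (Fin.last N)) • B (Fin.last N) := by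
  intro p hp
  change p = birkhoffExpansion τ B p
  rw [← sub_eq_zero]
  have hcard : (Finset.univ.image (τ ∘ Fin.castSucc)).card = N := by
    rw [Finset.card_image_of_injective _ (hτ.injective.comp (Fin.castSucc_injective N)),
      Finset.card_univ, Fintype.card_fin]
  refine eq_zero_of_natDegree_le_card_of_derivative_eval_eq_zero
    (Finset.univ.image (τ ∘ Fin.castSucc)) (a := τ (Fin.last N)) ?_ ?_ ?_
  · rw [hcard]
    exact (natDegree_sub_le _ _).trans (max_le hp (natDegree_birkhoffExpansion_le hBdeg p))
  · simp only [Finset.mem_image, Finset.mem_univ, true_and, forall_exists_index]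
    rintro _ i rfl
    rw [derivative_sub, eval_sub, Function.comp_apply,
      eval_derivative_birkhoffExpansion hBN' hBj', sub_self]
  · rw [eval_sub, eval_last_birkhoffExpansion hBNN hBjN, sub_self]

/-- Case (b): the Birkhoff expansion reproduces every polynomial of degree ≤ N:
`p = Σ_{j=0}^{N−1} p'(τ_j)·B_j + p(τ_N)·B_N` as an identity of polynomials. -/
theorem birkhoff_case_b_expansion_exact
    (N : ℕ) (hN : 1 ≤ N) (τ : Fin (N + 1) → ℝ) (hτ : StrictMono τ)
    (B : Fin (N + 1) → Polynomial ℝ)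
    (hBdeg : ∀ j, (B j).natDegree ≤ N)
    (hBNN : (B (Fin.last N)).eval (τ (Fin.last N)) = 1)
    (hBjN : ∀ j : Fin N, (B j.castSucc).eval (τ (Fin.last N)) = 0)
    (hBN' : ∀ i : Fin N, (derivative (B (Fin.last N))).eval (τ i.castSucc) = 0)
    (hBj' : ∀ i j : Fin N,
      (derivative (B j.castSucc)).eval (τ i.castSucc) = if i = j then 1 else 0) :
    ∀ p : Polynomial ℝ, p.natDegree ≤ N →
      p = (∑ j : Fin N, ((derivative p).eval (τ j.castSucc)) • B j.castSucc) +
        p.eval (τ (Fin.last N)) • B (Fin.last N) :=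
  birkhoff_case_b_expansion_exact_general N τ hτ B hBdeg hBNN hBjN hBN' hBj'
end
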